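/- arXiv:1710.08803 — 2 statements merged into one kernel-verified Lean document; each statement's English description precedes it below -/
import Mathlib

section
/- For 0 < p₁ < p₂ < 1 and any natural number α ≥ 1, the expected return time E(p) = (p Σ_{j=0}^{α−1}(1−p)^j (j+1) + α(1−p)^α)/(1−p)^α is strictly increasing in p on (0,1); in particular E(p₁) < E(p₂). -/
/-!
Multiplying by `1 - q` telescopes the weighted geometric sum, which gives the closed form
`E(p) = ∑_{j<α} (1 - p)⁻¹ ^ (j + 1)`. Each term is a positive power of `(1 - p)⁻¹`, which is
positive and strictly increasing in `p < 1`, so `E` is strictly increasing as soon as `α ≥ 1`.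
-/

open Finset

theorem one_sub_mul_sum_range_pow_mul_succ_add {R : Type*} [CommRing R] (q : R) (n : ℕ) :
    (1 - q) * ∑ j ∈ range n, q ^ j * (j + 1) + n * q ^ n = ∑ k ∈ range n, q ^ k := by
  induction n with
  | zero => simp
  | succ n ih =>
    simp only [sum_range_succ, Nat.cast_succ]
    linear_combination ih

theorem sum_range_pow_div_pow {K : Type*} [Field K] {q : K} (hq : q ≠ 0) (n : ℕ) :
    (∑ k ∈ range n, q ^ k) / q ^ n = ∑ j ∈ range n, q⁻¹ ^ (j + 1) := by
  rw [sum_div, ← sum_range_reflect]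
  refine sum_congr rfl fun j hj => ?_
  have hn : q ^ n = q ^ (n - 1 - j) * q ^ (j + 1) := by
    rw [← pow_add]; congr 1; have := mem_range.mp hj; omega
  rw [inv_pow, hn, div_mul_cancel_left₀ (pow_ne_zero _ hq)]

noncomputable def expectedReturnTime (α : ℕ) (p : ℝ) : ℝ :=
  (p * ∑ j ∈ range α, (1 - p) ^ j * (j + 1) + α * (1 - p) ^ α) / (1 - p) ^ α

theorem expectedReturnTime_eq_sum {p : ℝ} (hp : p < 1) (α : ℕ) :
    expectedReturnTime α p = ∑ j ∈ range α, (1 - p)⁻¹ ^ (j + 1) := by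
  have hq : 1 - p ≠ 0 := by linarith
  have h := one_sub_mul_sum_range_pow_mul_succ_add (1 - p) α
  rw [sub_sub_cancel] at h
  rw [expectedReturnTime, h, sum_range_pow_div_pow hq]

theorem strictMonoOn_expectedReturnTime {α : ℕ} (hα : α ≠ 0) :
    StrictMonoOn (expectedReturnTime α) (Set.Iio 1) := by
  intro a ha b hb hab
  rw [expectedReturnTime_eq_sum ha, expectedReturnTime_eq_sum hb]
  have hb' : 0 < 1 - b := sub_pos.mpr hb
  have hinv : (1 - a)⁻¹ < (1 - b)⁻¹ := inv_strictAnti₀ hb' (by linarith)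
  refine sum_lt_sum_of_nonempty (nonempty_range_iff.mpr hα) fun j _ => ?_
  exact pow_lt_pow_left₀ hinv (inv_nonneg.mpr (by linarith)) j.succ_ne_zero

/-- The expected return time `E(p)` is strictly increasing in `p` on `(0,1)`;
in particular `E(p₁) < E(p₂)` for `0 < p₁ < p₂ < 1`. -/
theorem expected_return_time_strictMono (α : ℕ) (hα : 1 ≤ α) :
    StrictMonoOn
      (fun p : ℝ =>
        (p * ∑ j ∈ Finset.range α, (1 - p) ^ j * (j + 1) + α * (1 - p) ^ α) /
          (1 - p) ^ α) (Set.Ioo (0 : ℝ) 1) ∧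
    ∀ p₁ p₂ : ℝ, 0 < p₁ → p₁ < p₂ → p₂ < 1 →
      (p₁ * ∑ j ∈ Finset.range α, (1 - p₁) ^ j * (j + 1) + α * (1 - p₁) ^ α) /
          (1 - p₁) ^ α <
        (p₂ * ∑ j ∈ Finset.range α, (1 - p₂) ^ j * (j + 1) + α * (1 - p₂) ^ α) /
          (1 - p₂) ^ α := by
  have mono : StrictMonoOn (expectedReturnTime α) (Set.Iio 1) :=
    strictMonoOn_expectedReturnTime (by omega)
  exact ⟨mono.mono Set.Ioo_subset_Iio_self,
    fun p₁ p₂ _ h₁₂ h₂ => mono (h₁₂.trans h₂) h₂ h₁₂⟩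
end

section
/- Define the cumulative return probability recursively by Pr(n) = 0 for n < α, Pr(α) = q^α, and Pr(n) = q^α + (n − α)·p·q^α − p·q^α·Σ_{i=0}^{n−α−1} Pr(i) for n > α, where p ∈ (0,1), q = 1 − p. Then Pr(n) is nondecreasing in n, Pr(n) ∈ [0,1] for all n, and Pr(n) → 1 as n → ∞. -/
/-!
Write `q = 1 - p` and `u n = 1 - Pr n`, the probability that the first `n` trials contain no run of
`α` failures. The recursion becomes `u (n + 1) = u n - p q^α u (n - α)` for `n ≥ α`. Conditioning on
the length `j < α` of the final run of failures gives the renewal identity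
`u n = p ∑_{j < α} q^j u (n - 1 - j)`, which shows `u ≥ 0`; hence `u` is antitone, so it converges
to some `L ≥ 0`, and passing to the limit in the recursion gives `p q^α L = 0`, i.e. `L = 0`.
-/

open Finset Filter Topology

theorem sum_range_pow_mul_shift {R : Type*} [CommRing R] (q : R) (v : ℕ → R) (α n : ℕ) :
    ∑ j ∈ range α, q ^ j * v (n - j) =
      q * ∑ j ∈ range α, q ^ j * v (n - 1 - j) + v n - q ^ α * v (n - α) := by
  induction α with
  | zero => simp
  | succ k ih =>
    rw [sum_range_succ, sum_range_succ, ih, show n - 1 - k = n - (k + 1) by omega]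
    ring

theorem mul_geom_sum_one_sub (p : ℝ) (N : ℕ) :
    p * ∑ j ∈ range N, (1 - p) ^ j = 1 - (1 - p) ^ N := by
  simpa using mul_neg_geom_sum (1 - p) N

structure NoRunRecurrence (p : ℝ) (α : ℕ) (u : ℕ → ℝ) : Prop where
  eq_one_of_lt : ∀ n < α, u n = 1
  eq_at : u α = 1 - (1 - p) ^ α
  succ_eq : ∀ n, α ≤ n → u (n + 1) = u n - p * (1 - p) ^ α * u (n - α)

namespace NoRunRecurrence

variable {p : ℝ} {α : ℕ} {u : ℕ → ℝ}

theorem renewal (h : NoRunRecurrence p α u) {n : ℕ} (hn : α ≤ n) :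
    u n = p * ∑ j ∈ range α, (1 - p) ^ j * u (n - 1 - j) := by
  induction n, hn using Nat.le_induction with
  | base =>
    have hone : ∀ j ∈ range α, (1 - p) ^ j * u (α - 1 - j) = (1 - p) ^ j := fun j hj => by
      rw [h.eq_one_of_lt _ (by rw [mem_range] at hj; omega), mul_one]
    rw [sum_congr rfl hone, mul_geom_sum_one_sub, h.eq_at]
  | succ n hn ih =>
    rw [Nat.add_sub_cancel, sum_range_pow_mul_shift, h.succ_eq n hn]
    linear_combination (1 - p) * ih

theorem nonneg (h : NoRunRecurrence p α u) (hp0 : 0 ≤ p) (hp1 : p ≤ 1) (n : ℕ) : 0 ≤ u n := by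
  induction n using Nat.strong_induction_on with
  | _ n ih =>
    rcases lt_or_ge n α with hn | hn
    · rw [h.eq_one_of_lt n hn]
      exact zero_le_one
    · rw [h.renewal hn]
      refine mul_nonneg hp0 (sum_nonneg fun j hj => mul_nonneg (by bound) (ih _ ?_))
      rw [mem_range] at hj
      omega

theorem antitone (h : NoRunRecurrence p α u) (hp0 : 0 ≤ p) (hp1 : p ≤ 1) : Antitone u := by
  refine antitone_nat_of_succ_le fun n => ?_
  rcases lt_or_ge n α with hn | hn
  · rcases (show n + 1 ≤ α from hn).lt_or_eq with hn' | rfl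
    · rw [h.eq_one_of_lt n hn, h.eq_one_of_lt _ hn']
    · rw [h.eq_one_of_lt n hn, h.eq_at]
      have : 0 ≤ (1 - p) ^ (n + 1) := by bound
      linarith
  · rw [h.succ_eq n hn]
    have : 0 ≤ p * (1 - p) ^ α * u (n - α) := mul_nonneg (by bound) (h.nonneg hp0 hp1 _)
    linarith

theorem le_one (h : NoRunRecurrence p α u) (hp0 : 0 ≤ p) (hp1 : p ≤ 1) (n : ℕ) : u n ≤ 1 := by
  refine (h.antitone hp0 hp1 (Nat.zero_le n)).trans ?_
  rcases Nat.eq_zero_or_pos α with rfl | hα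
  · simp [h.eq_at]
  · exact (h.eq_one_of_lt 0 hα).le

theorem tendsto_zero (h : NoRunRecurrence p α u) (hp0 : 0 < p) (hp1 : p < 1) :
    Tendsto u atTop (𝓝 0) := by
  set L := ⨅ n, u n
  have hL : Tendsto u atTop (𝓝 L) :=
    tendsto_atTop_ciInf (h.antitone hp0.le hp1.le) ⟨0, by
      rintro _ ⟨n, rfl⟩
      exact h.nonneg hp0.le hp1.le n⟩
  have hrec : Tendsto (fun n => u n - p * (1 - p) ^ α * u (n - α)) atTop
      (𝓝 (L - p * (1 - p) ^ α * L)) :=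
    hL.sub ((hL.comp (tendsto_sub_atTop_nat α)).const_mul _)
  have hshift : Tendsto (fun n => u (n + 1)) atTop (𝓝 (L - p * (1 - p) ^ α * L)) :=
    hrec.congr' (eventually_atTop.2 ⟨α, fun n hn => (h.succ_eq n hn).symm⟩)
  have hfix : p * (1 - p) ^ α * L = 0 := by
    linarith [tendsto_nhds_unique ((tendsto_add_atTop_iff_nat 1).2 hL) hshift]
  have hc : p * (1 - p) ^ α ≠ 0 := by
    have : 0 < 1 - p := by linarith
    positivity
  rwa [(mul_eq_zero.1 hfix).resolve_left hc] at hL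

end NoRunRecurrence

theorem noRunRecurrence_one_sub {p : ℝ} {α : ℕ} {Pr : ℕ → ℝ}
    (h0 : ∀ n, n < α → Pr n = 0)
    (h1 : Pr α = (1 - p) ^ α)
    (h2 : ∀ n, α < n →
      Pr n = (1 - p) ^ α + ((n : ℝ) - α) * p * (1 - p) ^ α -
        p * (1 - p) ^ α * ∑ i ∈ Finset.range (n - α), Pr i) :
    NoRunRecurrence p α (fun n => 1 - Pr n) where
  eq_one_of_lt n hn := by simp [h0 n hn]
  eq_at := by rw [h1]
  succ_eq := fun n hn => by
    rcases hn.eq_or_lt with rfl | hn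
    · rw [h2 (α + 1) (by omega), h1, Nat.add_sub_cancel_left, sum_range_one, Nat.sub_self]
      push_cast
      ring
    · rw [h2 (n + 1) (by omega), h2 n hn, Nat.sub_add_comm hn.le, sum_range_succ]
      push_cast
      ring

theorem cumulative_return_probability_general (p : ℝ) (hp0 : 0 < p) (hp1 : p < 1)
    (α : ℕ) (Pr : ℕ → ℝ)
    (h0 : ∀ n, n < α → Pr n = 0)
    (h1 : Pr α = (1 - p) ^ α)
    (h2 : ∀ n, α < n →
      Pr n = (1 - p) ^ α + ((n : ℝ) - α) * p * (1 - p) ^ α -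
        p * (1 - p) ^ α * ∑ i ∈ Finset.range (n - α), Pr i) :
    Monotone Pr ∧ (∀ n, 0 ≤ Pr n ∧ Pr n ≤ 1) ∧
      Filter.Tendsto Pr Filter.atTop (nhds 1) := by
  have hu := noRunRecurrence_one_sub h0 h1 h2
  refine ⟨fun m n hmn => ?_, fun n => ⟨?_, ?_⟩, ?_⟩
  · linarith [hu.antitone hp0.le hp1.le hmn]
  · linarith [hu.le_one hp0.le hp1.le n]
  · linarith [hu.nonneg hp0.le hp1.le n]
  · simpa using (hu.tendsto_zero hp0 hp1).const_sub 1

/-- The cumulative return probability defined by the paper's recursion is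
nondecreasing, lies in `[0,1]`, and tends to `1`. -/
theorem cumulative_return_probability (p : ℝ) (hp0 : 0 < p) (hp1 : p < 1)
    (α : ℕ) (hα : 1 ≤ α) (Pr : ℕ → ℝ)
    (h0 : ∀ n, n < α → Pr n = 0)
    (h1 : Pr α = (1 - p) ^ α)
    (h2 : ∀ n, α < n →
      Pr n = (1 - p) ^ α + ((n : ℝ) - α) * p * (1 - p) ^ α -
        p * (1 - p) ^ α * ∑ i ∈ Finset.range (n - α), Pr i) :
    Monotone Pr ∧ (∀ n, 0 ≤ Pr n ∧ Pr n ≤ 1) ∧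
      Filter.Tendsto Pr Filter.atTop (nhds 1) :=
  cumulative_return_probability_general p hp0 hp1 α Pr h0 h1 h2
end
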